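/- Let n ≥ 2, let Ω ⊊ ℝⁿ be a domain (nonempty, open, connected) with topological boundary M = bΩ, and let ε > 0. Assume that every point x ∈ ℝⁿ with dist(x, M) < ε has a unique nearest point in M, and that the signed distance function δ (equal to dist(·, M) on the complement of Ω and to −dist(·, M) on Ω) is C² on the tube V_ε(M) = {x ∈ ℝⁿ : dist(x, M) < ε} with ‖∇δ‖ ≡ 1 there. Then for every p ∈ M and every unit vector v ∈ ℝⁿ with ∇δ(p)·v = 0, one has Hess δ(p)(v, v) ≤ 1/ε. -/

import Mathlib

open RealInnerProductSpace

noncomputable def Hess {n : ℕ} (δ : EuclideanSpace ℝ (Fin n) → ℝ)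
    (x v w : EuclideanSpace ℝ (Fin n)) : ℝ :=
  fderiv ℝ (fun y => fderiv ℝ δ y v) x w

/-! Everything happens in the ball `B(p, ε)`, which lies in the tube, so `δ` is `C²` there with
`‖∇δ‖ = 1`. Differentiating `‖∇δ‖² = 1` and using the symmetry of the Hessian gives
`D∇δ(x) ∇δ(x) = 0`, so by Grönwall `∇δ` is constant along the normal segment `p - t ∇δ(p)` and
`δ(p - t ∇δ(p)) = δ(p) - t` for `0 ≤ t < ε`. As `δ` is `1`-Lipschitz, Pythagoras gives, for a unit
tangent vector `v`, `δ(p + s v) ≤ δ(p) - t + √(s² + t²) ≤ δ(p) + s² / (2t)`. So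
`s ↦ δ(p + s v) - s² / (2t)` has a local maximum at `0`, whence `Hess δ(p)(v,v) ≤ 1/t`;
let `t → ε`. -/

open Set Metric Filter Topology InnerProductSpace

theorem IsLocalMax.nonpos_of_hasDerivAt_of_hasDerivAt {f f' : ℝ → ℝ} {a H : ℝ}
    (h : IsLocalMax f a) (hf : ∀ᶠ x in 𝓝 a, HasDerivAt f (f' x) x) (hf' : HasDerivAt f' H a) :
    H ≤ 0 := by
  have hderiv : deriv f =ᶠ[𝓝 a] f' := hf.mono fun x hx => hx.deriv
  have hH : deriv (deriv f) a = H := hderiv.deriv_eq.trans hf'.deriv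
  by_contra! hpos
  have hmin : IsLocalMin f a :=
    isLocalMin_of_deriv_deriv_pos (hH ▸ hpos) h.deriv_eq_zero hf.self_of_nhds.continuousAt
  have hconst : f =ᶠ[𝓝 a] fun _ => f a := (h.and hmin).mono fun x hx => le_antisymm hx.1 hx.2
  have hzero : deriv (deriv f) a = 0 := by
    rw [hconst.deriv.deriv_eq]
    simp
  linarith

section Eikonal

variable {F : Type*} [NormedAddCommGroup F] [InnerProductSpace ℝ F] [CompleteSpace F]
  {f : F → ℝ} {U : Set F} {x p v : F}

theorem norm_fderiv_eq_norm_gradient (f : F → ℝ) (x : F) : ‖fderiv ℝ f x‖ = ‖gradient f x‖ := by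
  rw [← toDual_gradient, LinearIsometryEquiv.norm_map]

theorem ContDiffOn.gradient_of_isOpen {m n : WithTop ℕ∞} (hf : ContDiffOn ℝ n f U)
    (hU : IsOpen U) (hmn : m + 1 ≤ n) : ContDiffOn ℝ m (gradient f) U :=
  (toDual ℝ F).symm.contDiff.comp_contDiffOn (hf.fderiv_of_isOpen hU hmn)

theorem inner_fderiv_gradient_apply (u w : F) :
    ⟪fderiv ℝ (gradient f) x u, w⟫ = fderiv ℝ (fderiv ℝ f) x u w := by
  change ⟪fderiv ℝ ((toDual ℝ F).symm ∘ fderiv ℝ f) x u, w⟫ = _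
  rw [LinearIsometryEquiv.comp_fderiv]
  exact toDual_symm_apply

theorem fderiv_gradient_apply_gradient_eq_zero (hU : IsOpen U) (hf : ContDiffOn ℝ 2 f U)
    (hgrad : ∀ y ∈ U, ‖gradient f y‖ = 1) (hx : x ∈ U) :
    fderiv ℝ (gradient f) x (gradient f x) = 0 := by
  set D := fderiv ℝ (gradient f) x
  have hsymm : IsSymmSndFDerivAt ℝ f x :=
    (hf.contDiffAt (hU.mem_nhds hx)).isSymmSndFDerivAt (by simp)
  have hD : HasFDerivAt (gradient f) D x :=
    (((hf.gradient_of_isOpen hU (m := 1) (by norm_num)).differentiableOn one_ne_zero x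
      hx).differentiableAt (hU.mem_nhds hx)).hasFDerivAt
  have hnorm_sq : (‖gradient f ·‖ ^ 2) =ᶠ[𝓝 x] fun _ => (1 : ℝ) :=
    eventually_of_mem (hU.mem_nhds hx) fun y hy => by simp [hgrad y hy]
  have hperp (u : F) : ⟪gradient f x, D u⟫ = 0 := by
    have h := hD.norm_sq.unique ((hasFDerivAt_const _ x).congr_of_eventuallyEq hnorm_sq)
    simpa using congrArg (· u) h
  have hself : ⟪D (gradient f x), D (gradient f x)⟫ = 0 := by
    rw [inner_fderiv_gradient_apply, hsymm, ← inner_fderiv_gradient_apply, real_inner_comm]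
    exact hperp _
  exact inner_self_eq_zero.mp hself

theorem gradient_sub_smul_gradient_eq (hU : IsOpen U) (hf : ContDiffOn ℝ 2 f U)
    (hgrad : ∀ y ∈ U, ‖gradient f y‖ = 1) {T : ℝ}
    (hseg : ∀ t ∈ Icc 0 T, p - t • gradient f p ∈ U) :
    ∀ t ∈ Icc 0 T, gradient f (p - t • gradient f p) = gradient f p := by
  set g := gradient f p
  set c : ℝ → F := fun t => p - t • g
  have hc (t : ℝ) : HasDerivAt c (-g) t := by
    simpa using ((hasDerivAt_id t).smul_const g).const_sub p
  have hG : ContDiffOn ℝ 1 (gradient f) U := hf.gradient_of_isOpen hU (by norm_num)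
  set A : ℝ → F →L[ℝ] F := fun t => fderiv ℝ (gradient f) (c t)
  obtain ⟨K, hK⟩ : ∃ K, ∀ t ∈ Icc 0 T, ‖A t‖ ≤ K :=
    isCompact_Icc.exists_bound_of_continuousOn
      ((hG.continuousOn_fderiv_of_isOpen hU le_rfl).comp (by fun_prop : Continuous c).continuousOn
        hseg)
  -- `A t (∇f (c t)) = 0` turns the equation for `∇f ∘ c` into a linear ODE for `∇f ∘ c - g`.
  have hw : ∀ t ∈ Icc 0 T,
      HasDerivAt (fun s => gradient f (c s) - g) (A t (gradient f (c t) - g)) t := by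
    intro t ht
    have hA : HasFDerivAt (gradient f) (A t) (c t) :=
      ((hG.differentiableOn one_ne_zero _ (hseg t ht)).differentiableAt
        (hU.mem_nhds (hseg t ht))).hasFDerivAt
    rw [map_sub, fderiv_gradient_apply_gradient_eq_zero hU hf hgrad (hseg t ht), zero_sub,
      ← map_neg]
    exact (hA.comp_hasDerivAt t (hc t)).sub_const g
  intro t ht
  refine sub_eq_zero.mp <| eq_zero_of_abs_deriv_le_mul_abs_self_of_eq_zero_right (K := K)
    (fun s hs => (hw s hs).continuousAt.continuousWithinAt)
    (fun s hs => (hw s (Ico_subset_Icc_self hs)).hasDerivWithinAt) (by simp [c, g]) ?_ t ht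
  intro s hs
  exact ((A s).le_opNorm _).trans
    (mul_le_mul_of_nonneg_right (hK s (Ico_subset_Icc_self hs)) (norm_nonneg _))

theorem apply_sub_smul_gradient_eq_sub (hU : IsOpen U) (hf : ContDiffOn ℝ 2 f U)
    (hgrad : ∀ y ∈ U, ‖gradient f y‖ = 1) {T : ℝ}
    (hseg : ∀ t ∈ Icc 0 T, p - t • gradient f p ∈ U) :
    ∀ t ∈ Icc 0 T, f (p - t • gradient f p) = f p - t := by
  set g := gradient f p
  have hderiv : ∀ t ∈ Icc 0 T, HasDerivAt (fun s => f (p - s • g)) (-1) t := by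
    intro t ht
    have hfd : HasFDerivAt f (fderiv ℝ f (p - t • g)) (p - t • g) :=
      ((hf.contDiffAt (hU.mem_nhds (hseg t ht))).differentiableAt (by norm_num)).hasFDerivAt
    have hline : HasDerivAt (fun s => p - s • g) (-g) t := by
      simpa using ((hasDerivAt_id t).smul_const g).const_sub p
    refine (hfd.comp_hasDerivAt t hline).congr_deriv ?_
    have hg : ‖g‖ = 1 := by simpa using hgrad _ (hseg 0 ⟨le_rfl, ht.1.trans ht.2⟩)
    rw [← inner_gradient_left, gradient_sub_smul_gradient_eq hU hf hgrad hseg t ht,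
      inner_neg_right, real_inner_self_eq_norm_sq, hg, one_pow]
  exact eq_of_has_deriv_right_eq (fun s hs => (hderiv s (Ico_subset_Icc_self hs)).hasDerivWithinAt)
    (fun s _ => ((hasDerivAt_id s).const_sub (f p)).hasDerivWithinAt)
    (fun s hs => (hderiv s hs).continuousAt.continuousWithinAt) (by fun_prop) (by simp)

theorem apply_add_smul_le_add_sq_div {ε t s : ℝ} (hf : ContDiffOn ℝ 2 f (ball p ε))
    (hgrad : ∀ y ∈ ball p ε, ‖gradient f y‖ = 1) (hv : ‖v‖ = 1)
    (hvperp : ⟪gradient f p, v⟫ = 0) (ht : t ∈ Ioo 0 ε) (hs : |s| < ε) :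
    f (p + s • v) ≤ f p + s ^ 2 / (2 * t) := by
  set g := gradient f p
  have ht₀ : 0 < t := ht.1
  have hg : ‖g‖ = 1 := hgrad p (mem_ball_self (ht₀.trans ht.2))
  have hseg : ∀ r ∈ Icc 0 t, p - r • g ∈ ball p ε := fun r hr => by
    rw [mem_ball, dist_eq_norm, sub_sub_cancel_left, norm_neg, norm_smul, hg, mul_one,
      Real.norm_of_nonneg hr.1]
    exact hr.2.trans_lt ht.2
  have hq : p - t • g ∈ ball p ε := hseg t ⟨ht₀.le, le_rfl⟩
  have hx : p + s • v ∈ ball p ε := by simpa [norm_smul, hv] using hs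
  have hlip : f (p + s • v) - f (p - t • g) ≤ ‖p + s • v - (p - t • g)‖ := by
    refine (le_abs_self _).trans ?_
    simpa using (convex_ball p ε).norm_image_sub_le_of_norm_fderiv_le
      (fun y hy => (hf.contDiffAt (isOpen_ball.mem_nhds hy)).differentiableAt (by norm_num))
      (fun y hy => ((norm_fderiv_eq_norm_gradient f y).trans (hgrad y hy)).le) hq hx
  have hpyth : ‖p + s • v - (p - t • g)‖ ^ 2 = s ^ 2 + t ^ 2 := by
    have horth : ⟪s • v, t • g⟫ = 0 := by
      rw [real_inner_smul_left, real_inner_smul_right, real_inner_comm, hvperp, mul_zero, mul_zero]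
    rw [show p + s • v - (p - t • g) = s • v + t • g by abel, sq,
      norm_add_sq_eq_norm_sq_add_norm_sq_real horth, norm_smul, norm_smul, hv, hg]
    simp only [Real.norm_eq_abs, mul_one, abs_mul_abs_self]
    ring
  have hdist : ‖p + s • v - (p - t • g)‖ ≤ t + s ^ 2 / (2 * t) := by
    refine le_of_pow_le_pow_left₀ two_ne_zero (by positivity) ?_
    have hexpand : (t + s ^ 2 / (2 * t)) ^ 2 = s ^ 2 + t ^ 2 + (s ^ 2 / (2 * t)) ^ 2 := by
      field_simp
      ring
    rw [hpyth, hexpand]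
    nlinarith [sq_nonneg (s ^ 2 / (2 * t))]
  have hnormal := apply_sub_smul_gradient_eq_sub isOpen_ball hf hgrad hseg t ⟨ht₀.le, le_rfl⟩
  linarith

theorem fderiv_fderiv_apply_le_inv_of_lt {ε t : ℝ} (hf : ContDiffOn ℝ 2 f (ball p ε))
    (hgrad : ∀ y ∈ ball p ε, ‖gradient f y‖ = 1) (hv : ‖v‖ = 1)
    (hvperp : ⟪gradient f p, v⟫ = 0) (ht : t ∈ Ioo 0 ε) :
    fderiv ℝ (fun y => fderiv ℝ f y v) p v ≤ 1 / t := by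
  have hε : 0 < ε := ht.1.trans ht.2
  have hline (s : ℝ) : HasDerivAt (fun r : ℝ => p + r • v) v s := by
    simpa using ((hasDerivAt_id s).smul_const v).const_add p
  have hmax : IsLocalMax (fun s => f (p + s • v) - s ^ 2 / (2 * t)) 0 := by
    filter_upwards [Ioo_mem_nhds (neg_neg_iff_pos.2 hε) hε] with s hs
    simpa using apply_add_smul_le_add_sq_div hf hgrad hv hvperp ht (abs_lt.2 hs)
  have hderiv : ∀ᶠ s in 𝓝 0, HasDerivAt (fun s => f (p + s • v) - s ^ 2 / (2 * t))
      (fderiv ℝ f (p + s • v) v - s / t) s := by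
    filter_upwards [Ioo_mem_nhds (neg_neg_iff_pos.2 hε) hε] with s hs
    have hx : p + s • v ∈ ball p ε := by simpa [norm_smul, hv] using abs_lt.2 hs
    have hfd : HasFDerivAt f (fderiv ℝ f (p + s • v)) (p + s • v) :=
      ((hf.contDiffAt (isOpen_ball.mem_nhds hx)).differentiableAt (by norm_num)).hasFDerivAt
    refine ((hfd.comp_hasDerivAt s (hline s)).sub
      ((hasDerivAt_pow 2 s).div_const (2 * t))).congr_deriv ?_
    field_simp
    ring
  have hderiv2 : HasDerivAt (fun s => fderiv ℝ f (p + s • v) v - s / t)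
      (fderiv ℝ (fun y => fderiv ℝ f y v) p v - 1 / t) 0 := by
    have hf' : DifferentiableAt ℝ (fderiv ℝ f) p :=
      ((hf.fderiv_of_isOpen isOpen_ball (m := 1) (by norm_num)).contDiffAt
        (isOpen_ball.mem_nhds (mem_ball_self hε))).differentiableAt one_ne_zero
    have happly := (hf'.clm_apply (differentiableAt_const v)).hasFDerivAt
    exact (happly.comp_hasDerivAt_of_eq 0 (hline 0) (by simp)).sub
      ((hasDerivAt_id 0).div_const t)
  linarith [hmax.nonpos_of_hasDerivAt_of_hasDerivAt hderiv hderiv2]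

theorem fderiv_fderiv_apply_le_inv_radius {ε : ℝ} (hε : 0 < ε)
    (hf : ContDiffOn ℝ 2 f (ball p ε)) (hgrad : ∀ y ∈ ball p ε, ‖gradient f y‖ = 1)
    (hv : ‖v‖ = 1) (hvperp : ⟪gradient f p, v⟫ = 0) :
    fderiv ℝ (fun y => fderiv ℝ f y v) p v ≤ 1 / ε := by
  have hlim : Tendsto (fun t : ℝ => 1 / t) (𝓝[<] ε) (𝓝 (1 / ε)) :=
    ((continuousAt_const.div continuousAt_id hε.ne').tendsto).mono_left nhdsWithin_le_nhds
  refine ge_of_tendsto hlim ?_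
  filter_upwards [Ioo_mem_nhdsLT hε] with t ht
  exact fderiv_fderiv_apply_le_inv_of_lt hf hgrad hv hvperp ht

end Eikonal

theorem principal_curvature_le_inv_tube_radius_general {n : ℕ}
    (M : Set (EuclideanSpace ℝ (Fin n)))
    (ε : ℝ) (hε : 0 < ε)
    (δ : EuclideanSpace ℝ (Fin n) → ℝ)
    (hδC2 : ContDiffOn ℝ 2 δ {x | Metric.infDist x M < ε})
    (hgrad : ∀ x : EuclideanSpace ℝ (Fin n), Metric.infDist x M < ε →
        ‖gradient δ x‖ = 1) :
    ∀ p ∈ M, ∀ v : EuclideanSpace ℝ (Fin n), ‖v‖ = 1 →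
      ⟪gradient δ p, v⟫ = 0 → Hess δ p v v ≤ 1 / ε := by
  intro p hp v hv hvperp
  have hball : ball p ε ⊆ {x | infDist x M < ε} := fun x hx =>
    (infDist_le_dist_of_mem hp).trans_lt (mem_ball.mp hx)
  exact fderiv_fderiv_apply_le_inv_radius hε (hδC2.mono hball)
    (fun x hx => hgrad x (hball hx)) hv hvperp

/-- Let `Ω ⊊ ℝⁿ` be a domain with boundary `M = bΩ` and `ε > 0`.
Assume every point at distance `< ε` from `M` has a unique nearest point in `M`, and
that the signed distance function `δ` (equal to `dist(·,M)` outside `Ω` and to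
`−dist(·,M)` on `Ω`) is `C²` on the tube `V_ε(M) = {x : dist(x,M) < ε}` with
`‖∇δ‖ ≡ 1` there. Then for every `p ∈ M` and every unit vector `v` tangent to `M`
at `p` (i.e. `∇δ(p)·v = 0`), the principal curvature `Hess δ(p)(v,v)` is `≤ 1/ε`. -/
theorem principal_curvature_le_inv_tube_radius {n : ℕ} (hn : 2 ≤ n)
    (Ω : Set (EuclideanSpace ℝ (Fin n))) (hne : Ω.Nonempty) (hopen : IsOpen Ω)
    (hconn : IsConnected Ω) (hproper : Ω ≠ Set.univ)
    (M : Set (EuclideanSpace ℝ (Fin n))) (hM : M = frontier Ω)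
    (ε : ℝ) (hε : 0 < ε)
    (hunique : ∀ x : EuclideanSpace ℝ (Fin n), Metric.infDist x M < ε →
        ∃! p, p ∈ M ∧ dist x p = Metric.infDist x M)
    (δ : EuclideanSpace ℝ (Fin n) → ℝ)
    (hδout : ∀ x ∉ Ω, δ x = Metric.infDist x M)
    (hδin : ∀ x ∈ Ω, δ x = -Metric.infDist x M)
    (hδC2 : ContDiffOn ℝ 2 δ {x | Metric.infDist x M < ε})
    (hgrad : ∀ x : EuclideanSpace ℝ (Fin n), Metric.infDist x M < ε →
        ‖gradient δ x‖ = 1) :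
    ∀ p ∈ M, ∀ v : EuclideanSpace ℝ (Fin n), ‖v‖ = 1 →
      ⟪gradient δ p, v⟫ = 0 → Hess δ p v v ≤ 1 / ε :=
  principal_curvature_le_inv_tube_radius_general M ε hε δ hδC2 hgrad
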